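/- Let m > 0, let d ≥ 1 be an integer, and let Q⁰, Q¹ : ℝ^d × ℝ^d → ℂ satisfy |Q^η(k₁,k₂)| ≤ M_Q for all k₁, k₂ ∈ ℝ^d and η ∈ {0,1}. Then there exists C > 0, depending only on m, d and M_Q, such that for all η ∈ {0,1}, all k₁, k₂ ∈ ℝ^d and all signs ι₁, ι₂ ∈ {−1, +1}: |q^η(k₁,k₂)| ≤ C ⟨k₁⟩^{−1} ⟨k₂⟩^{−1}, the quadratic resonance modulus Δ^{(ι₁,ι₂)}_{k₁,k₂} is nonzero, and |q^η(k₁,k₂) / Δ^{(ι₁,ι₂)}_{k₁,k₂}| ≤ C ⟨k₁⟩^{−1/2} ⟨k₂⟩^{−1/2}. -/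

import Mathlib

set_option maxHeartbeats 1000000


noncomputable section

/-- Euclidean space `ℝ^d`. -/
abbrev Euc (d : ℕ) := EuclideanSpace ℝ (Fin d)

/-- The Japanese bracket `⟨x⟩ = √(m + |x|²)` on `ℝ^d`. -/
def jb (m : ℝ) {d : ℕ} (x : Euc d) : ℝ :=
  Real.sqrt (m + ‖x‖ ^ 2)

/-- The quadratic resonance modulus `Δ^{(ι₁,ι₂)}_{k₁,k₂} = ⟨k₁+k₂⟩ − ι₁⟨k₁⟩ − ι₂⟨k₂⟩`. -/
def Δ₂ (m : ℝ) {d : ℕ} (ι₁ ι₂ : ℝ) (k₁ k₂ : Euc d) : ℝ :=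
  jb m (k₁ + k₂) - ι₁ * jb m k₁ - ι₂ * jb m k₂

/-- The normalized quadratic interaction coefficient
`q^η(k₁,k₂) = Q^η(k₁,k₂) / (4 (2π)^{d/2} ⟨k₁⟩ ⟨k₂⟩)`. -/
def q2 (m : ℝ) {d : ℕ} (Q : Fin 2 → Euc d → Euc d → ℂ) (η : Fin 2) (k₁ k₂ : Euc d) : ℂ :=
  Q η k₁ k₂ / ((4 * (2 * Real.pi) ^ ((d : ℝ) / 2) * (jb m k₁ * jb m k₂) : ℝ) : ℂ)

lemma key (m a b c s t : ℝ) (hm : 0 < m) (hs : 0 ≤ s) (ht : 0 ≤ t)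
    (ha : a = Real.sqrt (m + s^2)) (hb : b = Real.sqrt (m + t^2))
    (hc0 : 0 ≤ c) (hc : c^2 ≤ m + (s+t)^2) :
    m / (2 * Real.sqrt a * Real.sqrt b) ≤ a + b - c := by
  have hms : 0 ≤ m + s^2 := by positivity
  have hmt : 0 ≤ m + t^2 := by positivity
  have ha2 : a^2 = m + s^2 := by rw [ha, Real.sq_sqrt hms]
  have hb2 : b^2 = m + t^2 := by rw [hb, Real.sq_sqrt hmt]
  have ha0 : 0 < a := by rw [ha]; positivity
  have hb0 : 0 < b := by rw [hb]; positivity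
  set P := a * b with hP
  have hP0 : 0 < P := mul_pos ha0 hb0
  have hP2 : P^2 - (s*t)^2 = m*(a^2+b^2) - m^2 := by
    have : P^2 = a^2 * b^2 := by ring
    rw [this, ha2, hb2]; ring
  have hst : s*t ≤ P := by
    nlinarith [mul_nonneg hs ht, sq_nonneg (s*t - P)]
  -- key polynomial inequality
  have hkey1 : c^2 * (2*P) ≤ (a+b)^2 * (2*P - m) := by
    nlinarith [mul_nonneg (sub_nonneg.2 hst) (mul_nonneg hs ht), sq_nonneg (a-b), sq_nonneg (a+b)]
  have hPm : m ≤ P := by nlinarith [sq_nonneg (P - m)]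
  have hcab : c < a + b := by
    have h1 : c^2 * (2*P) < (a+b)^2 * (2*P) := by
      calc c^2 * (2*P) ≤ (a+b)^2 * (2*P - m) := hkey1
        _ < (a+b)^2 * (2*P) := by
            apply mul_lt_mul_of_pos_left _ (by positivity)
            linarith
    have h2 : c^2 < (a+b)^2 := lt_of_mul_lt_mul_right h1 (by positivity)
    nlinarith
  have hmain : m * (a+b)^2 ≤ ((a+b)^2 - c^2) * (2*P) := by nlinarith [hkey1]
  set r1 := Real.sqrt a with hr1
  set r2 := Real.sqrt b with hr2
  have hr10 : 0 < r1 := Real.sqrt_pos.2 ha0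
  have hr20 : 0 < r2 := Real.sqrt_pos.2 hb0
  have hr1s : r1^2 = a := Real.sq_sqrt ha0.le
  have hr2s : r2^2 = b := Real.sq_sqrt hb0.le
  have h2r : 2*(r1*r2) ≤ a + b := by nlinarith [sq_nonneg (r1 - r2)]
  have hD : 0 < a + b - c := by linarith
  rw [div_le_iff₀ (by positivity)]
  -- m ≤ (a+b-c) * (2 √a √b)
  have hstep1 : m * (a+b) ≤ 4 * (a+b-c) * P := by
    have h6 : (a+b-c)*(a+b+c)*(2*P) ≤ (a+b-c)*(2*(a+b))*(2*P) := by
      apply mul_le_mul_of_nonneg_right _ (by positivity)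
      apply mul_le_mul_of_nonneg_left (by linarith) hD.le
    have h7 : m*(a+b)^2 ≤ (a+b-c)*(2*(a+b))*(2*P) := by nlinarith
    nlinarith [mul_pos ha0 hb0]
  have hPr : P = (r1*r2)^2 := by rw [mul_pow, hr1s, hr2s]
  nlinarith [mul_pos hr10 hr20, mul_le_mul_of_nonneg_left h2r hm.le]

lemma jb_pos (m : ℝ) (hm : 0 < m) {d : ℕ} (x : Euc d) : 0 < jb m x := by
  unfold jb; positivity

lemma jb_ge (m : ℝ) (hm : 0 < m) {d : ℕ} (x : Euc d) : Real.sqrt m ≤ jb m x := by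
  apply Real.sqrt_le_sqrt; nlinarith [sq_nonneg ‖x‖]

lemma jb_neg (m : ℝ) {d : ℕ} (x : Euc d) : jb m (-x) = jb m x := by
  unfold jb; rw [norm_neg]

/-- wrapper: for any x y, `jb x + jb y - jb (x+y) ≥ m/(2 √(jb x) √(jb y))`. -/
lemma key' (m : ℝ) (hm : 0 < m) {d : ℕ} (x y : Euc d) :
    m / (2 * Real.sqrt (jb m x) * Real.sqrt (jb m y)) ≤ jb m x + jb m y - jb m (x + y) := by
  apply key m _ _ _ ‖x‖ ‖y‖ hm (norm_nonneg x) (norm_nonneg y) rfl rfl (Real.sqrt_nonneg _)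
  show Real.sqrt (m + ‖x + y‖^2) ^ 2 ≤ _
  rw [Real.sq_sqrt (by positivity)]
  have := norm_add_le x y
  nlinarith [norm_nonneg x, norm_nonneg y, norm_nonneg (x+y)]

lemma quarter_le (m u v w : ℝ) (hm : 0 < m) (hu : 0 < u) (hv : 0 < v) (hw : 0 < w)
    (h : w ≤ 2*v) : m/4 * u⁻¹ * v⁻¹ ≤ m / (2 * w * u) := by
  have he : m/4 * u⁻¹ * v⁻¹ = m / (4 * u * v) := by
    field_simp
  rw [he, div_le_div_iff₀ (by positivity) (by positivity)]
  nlinarith [mul_le_mul_of_nonneg_left h (mul_pos hm hu).le]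

/-- Lower bound on each resonance modulus. -/
lemma delta_lower (m : ℝ) (hm : 0 < m) {d : ℕ} (k₁ k₂ : Euc d) (ι₁ ι₂ : ℝ)
    (h1 : ι₁ = -1 ∨ ι₁ = 1) (h2 : ι₂ = -1 ∨ ι₂ = 1) :
    m / 4 * (Real.sqrt (jb m k₁))⁻¹ * (Real.sqrt (jb m k₂))⁻¹ ≤ |Δ₂ m ι₁ ι₂ k₁ k₂| := by
  set a := jb m k₁ with hA
  set b := jb m k₂ with hB
  set c := jb m (k₁ + k₂) with hC
  have ha0 : 0 < a := jb_pos m hm k₁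
  have hb0 : 0 < b := jb_pos m hm k₂
  have hc0 : 0 < c := jb_pos m hm (k₁ + k₂)
  have ham : Real.sqrt m ≤ a := jb_ge m hm k₁
  have hbm : Real.sqrt m ≤ b := jb_ge m hm k₂
  have hcm : Real.sqrt m ≤ c := jb_ge m hm (k₁ + k₂)
  have hra : 0 < Real.sqrt a := Real.sqrt_pos.2 ha0
  have hrb : 0 < Real.sqrt b := Real.sqrt_pos.2 hb0
  have hrm : 0 < Real.sqrt m := Real.sqrt_pos.2 hm
  -- the generic bound L ≤ √m (since √a, √b ≥ m^{1/4})
  have hrma : Real.sqrt (Real.sqrt m) ≤ Real.sqrt a := Real.sqrt_le_sqrt ham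
  have hrmb : Real.sqrt (Real.sqrt m) ≤ Real.sqrt b := Real.sqrt_le_sqrt hbm
  have hmm : Real.sqrt (Real.sqrt m) ^ 2 = Real.sqrt m := Real.sq_sqrt hrm.le
  have hL_sqrtm : m / 4 * (Real.sqrt a)⁻¹ * (Real.sqrt b)⁻¹ ≤ Real.sqrt m := by
    have h1 : (Real.sqrt a)⁻¹ ≤ (Real.sqrt (Real.sqrt m))⁻¹ :=
      inv_anti₀ (by positivity) hrma
    have h2 : (Real.sqrt b)⁻¹ ≤ (Real.sqrt (Real.sqrt m))⁻¹ :=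
      inv_anti₀ (by positivity) hrmb
    have h3 : m / 4 * (Real.sqrt a)⁻¹ * (Real.sqrt b)⁻¹
        ≤ m / 4 * (Real.sqrt (Real.sqrt m))⁻¹ * (Real.sqrt (Real.sqrt m))⁻¹ := by
      apply mul_le_mul (mul_le_mul_of_nonneg_left h1 (by positivity)) h2 (by positivity) (by positivity)
    have h4 : m / 4 * (Real.sqrt (Real.sqrt m))⁻¹ * (Real.sqrt (Real.sqrt m))⁻¹
        = m / (4 * Real.sqrt m) := by
      rw [mul_assoc, ← mul_inv, Real.mul_self_sqrt hrm.le]; ring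
    rw [h4] at h3
    have h5 : m / (4 * Real.sqrt m) ≤ Real.sqrt m := by
      rw [div_le_iff₀ (by positivity)]
      nlinarith [Real.mul_self_sqrt hm.le]
    linarith
  -- triangle bounds from key'
  have hk1 : m / (2 * Real.sqrt a * Real.sqrt b) ≤ a + b - c := key' m hm k₁ k₂
  have hk2 : m / (2 * Real.sqrt c * Real.sqrt a) ≤ c + a - b := by
    have := key' m hm (k₁ + k₂) (-k₁)
    simpa [jb_neg, add_neg_cancel_comm] using this
  have hk3 : m / (2 * Real.sqrt c * Real.sqrt b) ≤ c + b - a := by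
    have := key' m hm (k₁ + k₂) (-k₂)
    have e : k₁ + k₂ + -k₂ = k₁ := by abel
    simpa [jb_neg, e] using this
  rcases h1 with rfl | rfl <;> rcases h2 with rfl | rfl
  · -- (-1,-1) : Δ = c + a + b ≥ √m
    have : Δ₂ m (-1) (-1) k₁ k₂ = c + a + b := by unfold Δ₂; ring
    rw [this, abs_of_pos (by linarith)]
    linarith
  · -- (-1, 1) : Δ = c + a - b > 0
    have hΔ : Δ₂ m (-1) 1 k₁ k₂ = c + a - b := by unfold Δ₂; ring
    have hpos : 0 < c + a - b := lt_of_lt_of_le (by positivity) hk2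
    rw [hΔ, abs_of_pos hpos]
    rcases le_total a b with hab | hab
    · -- a ≤ b : c ≤ a + b ≤ 2b so √c ≤ 2√b, use hk2
      have hcb : c ≤ 2 * b := by
        have : 0 < a + b - c := lt_of_lt_of_le (by positivity) hk1
        linarith
      have hsc : Real.sqrt c ≤ 2 * Real.sqrt b := by
        calc Real.sqrt c ≤ Real.sqrt (2*b) := Real.sqrt_le_sqrt hcb
          _ ≤ 2 * Real.sqrt b := by
              rw [show (2:ℝ)*Real.sqrt b = Real.sqrt (4*b) from by
                rw [show (4:ℝ)*b = (2*Real.sqrt b)^2 from by nlinarith [Real.sq_sqrt hb0.le]];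
                rw [Real.sqrt_sq (by positivity)]]
              exact Real.sqrt_le_sqrt (by linarith)
      have := quarter_le m (Real.sqrt a) (Real.sqrt b) (Real.sqrt c) hm hra hrb (Real.sqrt_pos.2 hc0) hsc
      linarith
    · -- b ≤ a : Δ ≥ c ≥ √m ≥ L
      have : c + a - b ≥ c := by linarith
      linarith
  · -- (1, -1) : Δ = c - a + b > 0
    have hΔ : Δ₂ m 1 (-1) k₁ k₂ = c + b - a := by unfold Δ₂; ring
    have hpos : 0 < c + b - a := lt_of_lt_of_le (by positivity) hk3
    rw [hΔ, abs_of_pos hpos]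
    rcases le_total b a with hab | hab
    · have hca : c ≤ 2 * a := by
        have : 0 < a + b - c := lt_of_lt_of_le (by positivity) hk1
        linarith
      have hsc : Real.sqrt c ≤ 2 * Real.sqrt a := by
        calc Real.sqrt c ≤ Real.sqrt (2*a) := Real.sqrt_le_sqrt hca
          _ ≤ 2 * Real.sqrt a := by
              rw [show (2:ℝ)*Real.sqrt a = Real.sqrt (4*a) from by
                rw [show (4:ℝ)*a = (2*Real.sqrt a)^2 from by nlinarith [Real.sq_sqrt ha0.le]];
                rw [Real.sqrt_sq (by positivity)]]
              exact Real.sqrt_le_sqrt (by linarith)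
      have h9 := quarter_le m (Real.sqrt b) (Real.sqrt a) (Real.sqrt c) hm hrb hra (Real.sqrt_pos.2 hc0) hsc
      have h10 : m / 4 * (Real.sqrt a)⁻¹ * (Real.sqrt b)⁻¹ = m/4 * (Real.sqrt b)⁻¹ * (Real.sqrt a)⁻¹ := by ring
      linarith
    · have : c + b - a ≥ c := by linarith
      linarith
  · -- (1,1) : Δ = c - a - b < 0, |Δ| = a + b - c
    have hΔ : Δ₂ m 1 1 k₁ k₂ = c - a - b := by unfold Δ₂; ring
    have hpos : 0 < a + b - c := lt_of_lt_of_le (by positivity) hk1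
    rw [hΔ, abs_of_neg (by linarith)]
    have h9 := quarter_le m (Real.sqrt b) (Real.sqrt a) (Real.sqrt a) hm hrb hra hra (by linarith)
    have h10 : m / 4 * (Real.sqrt a)⁻¹ * (Real.sqrt b)⁻¹ = m/4 * (Real.sqrt b)⁻¹ * (Real.sqrt a)⁻¹ := by ring
    linarith
lemma hcalc_gen (MQ m sa sb : ℝ) (hm : 0 < m) (hsa : 0 < sa) (hsb : 0 < sb) :
    (MQ / (4*(sa^2*sb^2))) / (m/4 * sa⁻¹ * sb⁻¹) = MQ/m * (sa⁻¹*sb⁻¹) := by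
  field_simp

/-- If `Q⁰, Q¹` are bounded by `M_Q`, there is `C > 0` (depending only on `m, d, M_Q`) such
that `|q^η(k₁,k₂)| ≤ C ⟨k₁⟩⁻¹ ⟨k₂⟩⁻¹`, the quadratic resonance modulus is nonzero, and
`|q^η(k₁,k₂)/Δ^{(ι₁,ι₂)}_{k₁,k₂}| ≤ C ⟨k₁⟩^{−1/2} ⟨k₂⟩^{−1/2}`. -/
theorem stmt3 (m : ℝ) (hm : 0 < m) (d : ℕ) (hd : 1 ≤ d)
    (MQ : ℝ) (Q : Fin 2 → Euc d → Euc d → ℂ)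
    (hQ : ∀ (η : Fin 2) (k₁ k₂ : Euc d), ‖Q η k₁ k₂‖ ≤ MQ) :
    ∃ C : ℝ, 0 < C ∧ ∀ (η : Fin 2) (k₁ k₂ : Euc d) (ι₁ ι₂ : ℝ),
      (ι₁ = -1 ∨ ι₁ = 1) → (ι₂ = -1 ∨ ι₂ = 1) →
      ‖q2 m Q η k₁ k₂‖ ≤ C * (jb m k₁)⁻¹ * (jb m k₂)⁻¹ ∧
      Δ₂ m ι₁ ι₂ k₁ k₂ ≠ 0 ∧
      ‖q2 m Q η k₁ k₂ / ((Δ₂ m ι₁ ι₂ k₁ k₂ : ℝ) : ℂ)‖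
        ≤ C * (Real.sqrt (jb m k₁))⁻¹ * (Real.sqrt (jb m k₂))⁻¹ := by
  have hMQ : 0 ≤ MQ := le_trans (norm_nonneg _) (hQ 0 0 0)
  refine ⟨(MQ + 1) * (1 + 4/m), by positivity, ?_⟩
  intro η k₁ k₂ ι₁ ι₂ h1 h2
  set C := (MQ + 1) * (1 + 4/m) with hCdef
  set a := jb m k₁ with hA
  set b := jb m k₂ with hB
  have ha0 : 0 < a := jb_pos m hm k₁
  have hb0 : 0 < b := jb_pos m hm k₂
  have hra : 0 < Real.sqrt a := Real.sqrt_pos.2 ha0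
  have hrb : 0 < Real.sqrt b := Real.sqrt_pos.2 hb0
  have hsa : Real.sqrt a ^ 2 = a := Real.sq_sqrt ha0.le
  have hsb : Real.sqrt b ^ 2 = b := Real.sq_sqrt hb0.le
  -- the norm of q2
  set r : ℝ := 4 * (2 * Real.pi) ^ ((d : ℝ) / 2) * (a * b) with hr
  have hpow1 : (1:ℝ) ≤ (2 * Real.pi) ^ ((d : ℝ) / 2) :=
    Real.one_le_rpow (by nlinarith [Real.pi_gt_three]) (by positivity)
  have hr0 : 0 < r := by
    rw [hr]; positivity
  have hr4 : 4 * (a*b) ≤ r := by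
    rw [hr]
    have : 4 * (a*b) = 4 * 1 * (a*b) := by ring
    rw [this]
    apply mul_le_mul_of_nonneg_right _ (by positivity)
    nlinarith
  have hnq : ‖q2 m Q η k₁ k₂‖ = ‖Q η k₁ k₂‖ / r := by
    rw [q2, norm_div, Complex.norm_real, Real.norm_eq_abs, ← hA, ← hB, ← hr, abs_of_pos hr0]
  have hq_le : ‖q2 m Q η k₁ k₂‖ ≤ MQ / (4 * (a*b)) := by
    rw [hnq]
    exact div_le_div₀ hMQ (hQ η k₁ k₂) (by positivity) hr4
  have hCge1 : MQ / 4 ≤ C := by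
    rw [hCdef]; nlinarith [div_pos (by norm_num : (0:ℝ) < 4) hm]
  constructor
  · calc ‖q2 m Q η k₁ k₂‖ ≤ MQ / (4 * (a*b)) := hq_le
      _ = MQ / 4 * (a⁻¹ * b⁻¹) := by field_simp
      _ ≤ C * (a⁻¹ * b⁻¹) := mul_le_mul_of_nonneg_right hCge1 (by positivity)
      _ = C * a⁻¹ * b⁻¹ := by ring
  -- lower bound on Δ
  set L := m / 4 * (Real.sqrt a)⁻¹ * (Real.sqrt b)⁻¹ with hLdef
  have hL0 : 0 < L := by rw [hLdef]; positivity
  have hLD : L ≤ |Δ₂ m ι₁ ι₂ k₁ k₂| := delta_lower m hm k₁ k₂ ι₁ ι₂ h1 h2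
  have hDne : Δ₂ m ι₁ ι₂ k₁ k₂ ≠ 0 := by
    intro h
    rw [h, abs_zero] at hLD
    linarith
  refine ⟨hDne, ?_⟩
  have hstep : ‖q2 m Q η k₁ k₂ / ((Δ₂ m ι₁ ι₂ k₁ k₂ : ℝ) : ℂ)‖
      ≤ (MQ / (4 * (a*b))) / L := by
    rw [norm_div, Complex.norm_real, Real.norm_eq_abs]
    exact div_le_div₀ (by positivity) hq_le hL0 hLD
  have hcalc := hcalc_gen MQ m (Real.sqrt a) (Real.sqrt b) hm hra hrb
  rw [hsa, hsb] at hcalc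
  have hCge2 : MQ / m ≤ C := by
    rw [hCdef, div_le_iff₀ hm]
    have h4m : (4/m)*m = 4 := by field_simp
    nlinarith [h4m, mul_nonneg hMQ hm.le]
  calc ‖q2 m Q η k₁ k₂ / ((Δ₂ m ι₁ ι₂ k₁ k₂ : ℝ) : ℂ)‖
      ≤ (MQ / (4 * (a*b))) / L := hstep
    _ = MQ / m * ((Real.sqrt a)⁻¹ * (Real.sqrt b)⁻¹) := by rw [hLdef]; exact hcalc
    _ ≤ C * ((Real.sqrt a)⁻¹ * (Real.sqrt b)⁻¹) := mul_le_mul_of_nonneg_right hCge2 (by positivity)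
    _ = C * (Real.sqrt a)⁻¹ * (Real.sqrt b)⁻¹ := by ring
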